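/- arXiv:1511.04286 — 4 statements merged into one kernel-verified Lean document; each statement's English description precedes it below -/
import Mathlib

section
/- Let cl be a closure operation satisfying the functoriality axiom and the direct sum decomposition property. If N_i ⊆ M_i for i = 1, 2 are R-modules, then (N_1 ⊕ N_2)^cl_{M_1 ⊕ M_2} = (N_1)^cl_{M_1} ⊕ (N_2)^cl_{M_2}. -/
/-! Projections and inclusions of the direct sum are homomorphisms, so functoriality together
with order-preservation pushes the closure of `N₁ ⊕ N₂` into `N₁^cl ⊕ N₂^cl` along `fst`, `snd`,
and pulls `N₁^cl`, `N₂^cl` into `(N₁ ⊕ N₂)^cl` along `inl`, `inr`. -/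

section ClosureOperation

variable {R : Type} [Ring R]
  (cl : ∀ (M : Type) [AddCommGroup M] [Module R M], Submodule R M → Submodule R M)

theorem map_cl_le_cl_of_map_le
    (mono : ∀ (W : Type) [AddCommGroup W] [Module R W] (N M : Submodule R W),
      N ≤ M → cl W N ≤ cl W M)
    (map_cl_le : ∀ (M W : Type) [AddCommGroup M] [Module R M] [AddCommGroup W] [Module R W]
      (f : M →ₗ[R] W) (N : Submodule R M), (cl M N).map f ≤ cl W (N.map f))
    {M W : Type} [AddCommGroup M] [Module R M] [AddCommGroup W] [Module R W]
    (f : M →ₗ[R] W) {N : Submodule R M} {N' : Submodule R W} (h : N.map f ≤ N') :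
    (cl M N).map f ≤ cl W N' :=
  (map_cl_le M W f N).trans (mono W _ _ h)

variable {M₁ M₂ : Type} [AddCommGroup M₁] [Module R M₁] [AddCommGroup M₂] [Module R M₂]
  (N₁ : Submodule R M₁) (N₂ : Submodule R M₂)

theorem cl_prod_le_prod_cl
    (mono : ∀ (W : Type) [AddCommGroup W] [Module R W] (N M : Submodule R W),
      N ≤ M → cl W N ≤ cl W M)
    (map_cl_le : ∀ (M W : Type) [AddCommGroup M] [Module R M] [AddCommGroup W] [Module R W]
      (f : M →ₗ[R] W) (N : Submodule R M), (cl M N).map f ≤ cl W (N.map f)) :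
    cl (M₁ × M₂) (N₁.prod N₂) ≤ (cl M₁ N₁).prod (cl M₂ N₂) :=
  have h := (Submodule.le_prod_iff ..).1 (le_refl (N₁.prod N₂))
  (Submodule.le_prod_iff ..).2
    ⟨map_cl_le_cl_of_map_le cl mono map_cl_le _ h.1,
      map_cl_le_cl_of_map_le cl mono map_cl_le _ h.2⟩

theorem prod_cl_le_cl_prod
    (mono : ∀ (W : Type) [AddCommGroup W] [Module R W] (N M : Submodule R W),
      N ≤ M → cl W N ≤ cl W M)
    (map_cl_le : ∀ (M W : Type) [AddCommGroup M] [Module R M] [AddCommGroup W] [Module R W]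
      (f : M →ₗ[R] W) (N : Submodule R M), (cl M N).map f ≤ cl W (N.map f)) :
    (cl M₁ N₁).prod (cl M₂ N₂) ≤ cl (M₁ × M₂) (N₁.prod N₂) :=
  have h := (Submodule.prod_le_iff ..).1 (le_refl (N₁.prod N₂))
  (Submodule.prod_le_iff ..).2
    ⟨map_cl_le_cl_of_map_le cl mono map_cl_le _ h.1,
      map_cl_le_cl_of_map_le cl mono map_cl_le _ h.2⟩

end ClosureOperation

theorem stmt2_general {R : Type} [CommRing R]
    (cl : ∀ (M : Type) [AddCommGroup M] [Module R M], Submodule R M → Submodule R M)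
    (ax3 : ∀ (W : Type) [AddCommGroup W] [Module R W] (N M : Submodule R W),
      N ≤ M → cl W N ≤ cl W M)
    (ax4 : ∀ (M W : Type) [AddCommGroup M] [Module R M] [AddCommGroup W] [Module R W]
      (f : M →ₗ[R] W) (N : Submodule R M), (cl M N).map f ≤ cl W (N.map f))
    {M₁ M₂ : Type} [AddCommGroup M₁] [Module R M₁] [AddCommGroup M₂] [Module R M₂]
    (N₁ : Submodule R M₁) (N₂ : Submodule R M₂) :
    cl (M₁ × M₂) (N₁.prod N₂) = (cl M₁ N₁).prod (cl M₂ N₂) :=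
  le_antisymm (cl_prod_le_prod_cl cl N₁ N₂ ax3 ax4) (prod_cl_le_cl_prod cl N₁ N₂ ax3 ax4)

/-- for a closure operation satisfying axioms (1)-(5),
`(N₁ ⊕ N₂)^cl_{M₁ ⊕ M₂} = (N₁)^cl_{M₁} ⊕ (N₂)^cl_{M₂}`. -/
theorem stmt2 {R : Type} [CommRing R]
    (cl : ∀ (M : Type) [AddCommGroup M] [Module R M], Submodule R M → Submodule R M)
    (ax1 : ∀ (M : Type) [AddCommGroup M] [Module R M] (N : Submodule R M), N ≤ cl M N)
    (ax2 : ∀ (M : Type) [AddCommGroup M] [Module R M] (N : Submodule R M),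
      cl M (cl M N) = cl M N)
    (ax3 : ∀ (W : Type) [AddCommGroup W] [Module R W] (N M : Submodule R W),
      N ≤ M → cl W N ≤ cl W M)
    (ax4 : ∀ (M W : Type) [AddCommGroup M] [Module R M] [AddCommGroup W] [Module R W]
      (f : M →ₗ[R] W) (N : Submodule R M), (cl M N).map f ≤ cl W (N.map f))
    (ax5 : ∀ (M : Type) [AddCommGroup M] [Module R M] (N : Submodule R M),
      cl M N = N → cl (M ⧸ N) (⊥ : Submodule R (M ⧸ N)) = ⊥)
    {M₁ M₂ : Type} [AddCommGroup M₁] [Module R M₁] [AddCommGroup M₂] [Module R M₂]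
    (N₁ : Submodule R M₁) (N₂ : Submodule R M₂) :
    cl (M₁ × M₂) (N₁.prod N₂) = (cl M₁ N₁).prod (cl M₂ N₂) :=
  stmt2_general cl ax3 ax4 N₁ N₂
end

section
/- With the setup of the exact sequence G →^{ν_1} F ⊕ R →^{μ_1} M → 0 built from an injection α: R → M (where ν_1(g) = (ν(g), ν̃(g)) and μ_1(f,r) = μ̃(f) - α(r)): if α(1) ∈ mM then ν̃: G → R is surjective; conversely, if ν̃ is surjective and Im ν ⊆ mF, then α(1) ∈ mM. -/
/-!
Since `μ` is onto, `M = α R + μ̃ F`, so `mM ⊆ α m + μ̃ F`. If `α 1 ∈ mM` this gives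
`μ̃ f = α (1 - r)` with `r ∈ m`; then `μ f = 0`, so `f = ν g` by exactness, and `ν̃ g = 1 - r`
is a unit, making `ν̃` onto.
Conversely, if `ν̃ g = 1` then `α 1 = μ̃ (ν g)`, which lies in `mM` as soon as `ν g ∈ mF`.
-/

open Submodule LinearMap

theorem Submodule.sup_range_eq_top_of_surjective_mkQ_comp {R M F : Type*} [Ring R]
    [AddCommGroup M] [Module R M] [AddCommGroup F] [Module R F]
    (N : Submodule R M) (φ : F →ₗ[R] M) (h : Function.Surjective (N.mkQ ∘ₗ φ)) :
    N ⊔ range φ = ⊤ := by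
  rw [← comap_map_mkQ, ← range_comp, range_eq_top.mpr h, comap_top]

theorem LinearMap.surjective_of_isUnit_apply {R G : Type*} [CommSemiring R]
    [AddCommMonoid G] [Module R G] (φ : G →ₗ[R] R) {g : G} (hu : IsUnit (φ g)) :
    Function.Surjective φ :=
  range_eq_top.mp (Ideal.eq_top_of_isUnit_mem _ (mem_range_self φ g) hu)

theorem exists_apply_eq_one_sub_of_mem_smul_top {R M F : Type*} [CommRing R]
    [AddCommGroup M] [Module R M] [AddCommGroup F] [Module R F]
    {I : Ideal R} {α : R →ₗ[R] M} {φ : F →ₗ[R] M} (hsup : range α ⊔ range φ = ⊤)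
    (h : α 1 ∈ I • (⊤ : Submodule R M)) : ∃ f, ∃ r ∈ I, φ f = α (1 - r) := by
  have hle : I • (⊤ : Submodule R M) ≤ map α I ⊔ range φ := by
    rw [← hsup, smul_sup, range_eq_map, ← map_smul'', Ideal.smul_eq_mul, Ideal.mul_top]
    exact sup_le_sup_left smul_le_right _
  obtain ⟨_, ⟨r, hr, rfl⟩, _, ⟨f, rfl⟩, hsum⟩ := mem_sup.mp (hle h)
  exact ⟨f, r, hr, by rw [map_sub, ← hsum, add_sub_cancel_left]⟩

theorem stmt10_general {R M : Type} [CommRing R] [IsLocalRing R]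
    [AddCommGroup M] [Module R M]
    (α : R →ₗ[R] M) (hα : Function.Injective α)
    {G F : Type} [AddCommGroup G] [Module R G]
    [AddCommGroup F] [Module R F]
    (ν : G →ₗ[R] F) (μ : F →ₗ[R] (M ⧸ LinearMap.range α))
    (hμsurj : Function.Surjective μ)
    (hexact : LinearMap.range ν = LinearMap.ker μ)
    (μt : F →ₗ[R] M) (hlift : (LinearMap.range α).mkQ.comp μt = μ)
    (νt : G →ₗ[R] R) (hνt : α.comp νt = μt.comp ν) :
    (α 1 ∈ (IsLocalRing.maximalIdeal R) • (⊤ : Submodule R M) →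
      Function.Surjective νt) ∧
    (Function.Surjective νt →
      LinearMap.range ν ≤ (IsLocalRing.maximalIdeal R) • (⊤ : Submodule R F) →
      α 1 ∈ (IsLocalRing.maximalIdeal R) • (⊤ : Submodule R M)) := by
  have hνt_apply (g : G) : α (νt g) = μt (ν g) := LinearMap.congr_fun hνt g
  constructor
  · intro hmem
    have hsup := sup_range_eq_top_of_surjective_mkQ_comp _ μt (hlift ▸ hμsurj)
    obtain ⟨f, r, hr, hf⟩ := exists_apply_eq_one_sub_of_mem_smul_top hsup hmem
    obtain ⟨g, rfl⟩ : f ∈ range ν := by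
      rw [hexact, mem_ker, ← hlift, comp_apply, hf]
      exact (Quotient.mk_eq_zero _).mpr (mem_range_self α _)
    have hg : νt g = 1 - r := hα (by rw [hνt_apply, hf])
    exact νt.surjective_of_isUnit_apply
      (hg ▸ IsLocalRing.isUnit_one_sub_self_of_mem_nonunits r hr)
  · intro hsurj hrange
    obtain ⟨g, hg⟩ := hsurj 1
    rw [← hg, hνt_apply]
    exact smul_top_le_comap_smul_top _ μt (hrange (mem_range_self ν g))

/-- in the setup of the exact sequence `G → F ⊕ R → M → 0` built
from an injection `α : R → M`: if `α 1 ∈ mM` then `ν̃` is surjective;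
conversely if `ν̃` is surjective and `Im ν ⊆ mF` then `α 1 ∈ mM`. -/
theorem stmt10 {R M : Type} [CommRing R] [IsDomain R] [IsLocalRing R]
    [AddCommGroup M] [Module R M]
    (α : R →ₗ[R] M) (hα : Function.Injective α)
    {G F : Type} [AddCommGroup G] [Module R G] [Module.Free R G]
    [AddCommGroup F] [Module R F] [Module.Free R F]
    (ν : G →ₗ[R] F) (μ : F →ₗ[R] (M ⧸ LinearMap.range α))
    (hμsurj : Function.Surjective μ)
    (hexact : LinearMap.range ν = LinearMap.ker μ)
    (μt : F →ₗ[R] M) (hlift : (LinearMap.range α).mkQ.comp μt = μ)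
    (νt : G →ₗ[R] R) (hνt : α.comp νt = μt.comp ν) :
    (α 1 ∈ (IsLocalRing.maximalIdeal R) • (⊤ : Submodule R M) →
      Function.Surjective νt) ∧
    (Function.Surjective νt →
      LinearMap.range ν ≤ (IsLocalRing.maximalIdeal R) • (⊤ : Submodule R F) →
      α 1 ∈ (IsLocalRing.maximalIdeal R) • (⊤ : Submodule R M)) :=
  stmt10_general α hα ν μ hμsurj hexact μt hlift νt hνt
end

section
/- Let R be a Noetherian commutative ring, ρ: R → T an R-algebra such that T is a finitely generated R-module, and G a free R-module (not necessarily of finite rank). Then the natural map φ: T ⊗_R Hom_R(G, R) → Hom_T(T ⊗_R G, T), defined by φ(t ⊗ h)(t' ⊗ g) = t t' ρ(h(g)), is an isomorphism of T-modules. -/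
/-! Choosing a basis `ι` of `G` identifies `Hom_R(G, R)` with `R^ι` and `Hom_T(T ⊗ G, T)` with
`Hom_R(G, T) ≅ T^ι`, so it suffices that `T ⊗_R R^ι → T^ι` is bijective. Both sides are right exact
in `T` (products of modules are exact) and agree on finite free modules, so the five lemma applied
to a finite presentation `R^m → R^n → T → 0`, which exists as `R` is Noetherian, concludes. -/

open TensorProduct Function

namespace TensorProduct

variable (R : Type*) [CommRing R] (ι : Type*)

lemma piScalarRightHom_rTensor {M N : Type*} [AddCommGroup M] [Module R M] [AddCommGroup N]
    [Module R N] (f : M →ₗ[R] N) :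
    f.compLeft ι ∘ₗ piScalarRightHom R R M ι = piScalarRightHom R R N ι ∘ₗ f.rTensor (ι → R) :=
  TensorProduct.ext' fun m r ↦ by ext i; simp

lemma piScalarRightHom_bijective_of_finite (κ : Type*) [Finite κ] :
    Bijective (piScalarRightHom R R (κ → R) ι) := by
  classical
  have := Fintype.ofFinite κ
  have hfactor : ⇑(piScalarRightHom R R (κ → R) ι) =
      swap ∘ piScalarRight R R (ι → R) κ ∘ TensorProduct.comm R (κ → R) (ι → R) := by
    ext x i k
    induction x with
    | zero => simp [swap]
    | tmul p q => simp [swap, mul_comm]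
    | add x y hx hy => simp_all [swap]
  rw [hfactor]
  exact swap_bijective.comp
    ((piScalarRight R R _ κ).bijective.comp (TensorProduct.comm R _ _).bijective)

end TensorProduct

lemma LinearMap.exact_compLeft {R M N P : Type*} [Semiring R] [AddCommMonoid M] [Module R M]
    [AddCommMonoid N] [Module R N] [AddCommMonoid P] [Module R P] {f : M →ₗ[R] N}
    {g : N →ₗ[R] P} (hfg : Exact f g) (ι : Type*) :
    Exact (f.compLeft ι) (g.compLeft ι) := by
  intro y
  have : ∀ i, g (y i) = 0 ↔ y i ∈ Set.range f := fun i ↦ hfg (y i)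
  simp only [Set.mem_range, funext_iff, compLeft_apply, Function.comp_apply, Pi.zero_apply, this]
  exact Classical.skolem

open LinearMap in
theorem TensorProduct.piScalarRightHom_bijective (R : Type*) [CommRing R] (M : Type*)
    [AddCommGroup M] [Module R M] [Module.FinitePresentation R M] (ι : Type*) :
    Bijective (piScalarRightHom R R M ι) := by
  obtain ⟨n, m, g, f, hg, hfg⟩ := Module.FinitePresentation.exists_fin' R M
  exact bijective_of_surjective_of_bijective_of_right_exact
    (f.rTensor (ι → R)) (g.rTensor (ι → R)) (f.compLeft ι) (g.compLeft ι)
    _ _ _ (piScalarRightHom_rTensor R ι f) (piScalarRightHom_rTensor R ι g)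
    (rTensor_exact _ hfg hg) (exact_compLeft hfg ι)
    (piScalarRightHom_bijective_of_finite R ι _).2 (piScalarRightHom_bijective_of_finite R ι _)
    (rTensor_surjective _ hg) hg.comp_left

noncomputable def Module.FinitePresentation.piScalarRight (R S M ι : Type*) [CommRing R]
    [CommSemiring S] [Algebra R S] [AddCommGroup M] [Module R M] [Module S M] [IsScalarTower R S M]
    [Module.FinitePresentation R M] : M ⊗[R] (ι → R) ≃ₗ[S] (ι → M) :=
  .ofBijective (piScalarRightHom R S M ι) (piScalarRightHom_bijective R M ι)

@[simp]
lemma Module.FinitePresentation.piScalarRight_tmul {R S M ι : Type*} [CommRing R]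
    [CommSemiring S] [Algebra R S] [AddCommGroup M] [Module R M] [Module S M] [IsScalarTower R S M]
    [Module.FinitePresentation R M] (x : M) (f : ι → R) :
    piScalarRight R S M ι (x ⊗ₜ f) = fun i ↦ f i • x :=
  piScalarRightHom_tmul R S M ι x f

/-- for a Noetherian ring `R`, a module-finite `R`-algebra `T`,
and a free `R`-module `G` (not necessarily of finite rank), the natural map
`T ⊗_R Hom_R(G, R) → Hom_T(T ⊗_R G, T)`, `t ⊗ h ↦ (t' ⊗ g ↦ t t' ρ(h g))`,
is an isomorphism of `T`-modules. -/
theorem stmt14 {R T G : Type} [CommRing R] [IsNoetherianRing R]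
    [CommRing T] [Algebra R T] [Module.Finite R T]
    [AddCommGroup G] [Module R G] [Module.Free R G] :
    ∃ φ : (T ⊗[R] (G →ₗ[R] R)) ≃ₗ[T] ((T ⊗[R] G) →ₗ[T] T),
      ∀ (t t' : T) (h : G →ₗ[R] R) (g : G),
        φ (t ⊗ₜ[R] h) (t' ⊗ₜ[R] g) = t * t' * algebraMap R T (h g) := by
  have := Module.finitePresentation_of_finite R T
  let b := Module.Free.chooseBasis R G
  refine ⟨AlgebraTensorModule.congr (.refl T T) (b.constr R).symm ≪≫ₗ
    Module.FinitePresentation.piScalarRight R T T _ ≪≫ₗ b.constr T ≪≫ₗ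
    LinearMap.liftBaseChangeEquiv T, fun t t' h g ↦ ?_⟩
  have hsymm : (b.constr R).symm h = fun i ↦ h (b i) := funext (b.constr_symm_apply R h)
  have hconstr : b.constr T (fun i ↦ h (b i) • t) = t • (Algebra.linearMap R T ∘ₗ h) :=
    b.constr_eq T fun i ↦ by simp [Algebra.smul_def, mul_comm]
  simp [hsymm, hconstr]
  ring
end

section
/- Let (R, m) be a local domain and cl a closure operation satisfying the big axioms. Let x_1, ..., x_{k+1} be a partial system of parameters, J = (x_1, ..., x_k). Suppose f: M → R/J is any R-module homomorphism (not necessarily surjective) and v ∈ M with f(v) = x_{k+1} + J. Then (Rv)_M^cl ∩ ker f ⊆ (Jv)_M^cl. -/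
/-! Adjoin a copy of `R` to `M` and extend `f` by the quotient map `R → R/J`: the extension
`M × R → R/J` is surjective, so generalized colon-capturing applies to it, and since `M` is a
retract of `M × R` compatibly with the maps to `R/J`, functoriality of the closure carries the
conclusion back to `M`. -/

def IsFullSOP {R : Type} [CommRing R] [IsLocalRing R] {d : ℕ} (y : Fin d → R) : Prop :=
  ringKrullDim R = d ∧
    IsLocalRing.maximalIdeal R ≤ (Ideal.span (Set.range y)).radical

def IsPartialSOP {R : Type} [CommRing R] [IsLocalRing R] {k : ℕ} (x : Fin k → R) : Prop :=
  ∃ (d : ℕ) (y : Fin d → R), IsFullSOP y ∧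
    ∃ ι : Fin k → Fin d, Function.Injective ι ∧ ∀ i, y (ι i) = x i

theorem LinearMap.coprod_surjective_of_surjective_right {R M M₂ M₃ : Type*} [Semiring R]
    [AddCommMonoid M] [AddCommMonoid M₂] [AddCommMonoid M₃] [Module R M] [Module R M₂]
    [Module R M₃] (f : M →ₗ[R] M₃) {g : M₂ →ₗ[R] M₃} (hg : Function.Surjective g) :
    Function.Surjective (f.coprod g) := fun c ↦
  let ⟨r, hr⟩ := hg c
  ⟨(0, r), by simp [hr]⟩

section Closure

variable {R : Type} [CommRing R]
  {cl : ∀ (M : Type) [AddCommGroup M] [Module R M], Submodule R M → Submodule R M}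

theorem inf_ker_le_cl_smul_span_of_retract
    (hcl : ∀ (M W : Type) [AddCommGroup M] [Module R M] [AddCommGroup W] [Module R W]
      (f : M →ₗ[R] W) (N : Submodule R M), (cl M N).map f ≤ cl W (N.map f))
    {M W N : Type} [AddCommGroup M] [Module R M] [AddCommGroup W] [Module R W]
    [AddCommGroup N] [Module R N] {f : M →ₗ[R] N} {g : W →ₗ[R] N} {ι : M →ₗ[R] W}
    {p : W →ₗ[R] M} (hpι : p ∘ₗ ι = LinearMap.id) (hgι : g ∘ₗ ι = f) (I : Ideal R) (v : M)
    (hg : cl W (Submodule.span R {ι v}) ⊓ LinearMap.ker g ≤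
      cl W (I • Submodule.span R {ι v})) :
    cl M (Submodule.span R {v}) ⊓ LinearMap.ker f ≤ cl M (I • Submodule.span R {v}) := by
  rintro u ⟨hu_cl, hu_ker⟩
  have hιu_cl : ι u ∈ cl W (Submodule.span R {ι v}) := by
    simpa [Submodule.map_span] using hcl M W ι _ ⟨u, hu_cl, rfl⟩
  have hιu_ker : ι u ∈ LinearMap.ker g := by
    rwa [LinearMap.mem_ker, ← LinearMap.comp_apply, hgι]
  have hpιv : p (ι v) = v := LinearMap.congr_fun hpι v
  have hpιu : p (ι u) = u := LinearMap.congr_fun hpι u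
  have := hcl W M p _ ⟨ι u, hg ⟨hιu_cl, hιu_ker⟩, rfl⟩
  rwa [Submodule.map_smul'', Submodule.map_span, Set.image_singleton, hpιv, hpιu] at this

end Closure

theorem stmt17_general {R : Type} [CommRing R] [IsLocalRing R]
    (cl : ∀ (M : Type) [AddCommGroup M] [Module R M], Submodule R M → Submodule R M)
    (ax4 : ∀ (M W : Type) [AddCommGroup M] [Module R M] [AddCommGroup W] [Module R W]
      (f : M →ₗ[R] W) (N : Submodule R M), (cl M N).map f ≤ cl W (N.map f))
    (ax7 : ∀ (k : ℕ) (x : Fin (k + 1) → R), IsPartialSOP x →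
      ∀ (M : Type) [AddCommGroup M] [Module R M]
        (f : M →ₗ[R] (R ⧸ Ideal.span (Set.range fun i : Fin k => x i.castSucc))),
        Function.Surjective f → ∀ v : M,
          f v = Submodule.Quotient.mk (x (Fin.last k)) →
          cl M (Submodule.span R {v}) ⊓ LinearMap.ker f ≤
            cl M ((Ideal.span (Set.range fun i : Fin k => x i.castSucc)) •
              Submodule.span R {v}))
    (k : ℕ) (x : Fin (k + 1) → R) (hx : IsPartialSOP x)
    (M : Type) [AddCommGroup M] [Module R M]
    (f : M →ₗ[R] (R ⧸ Ideal.span (Set.range fun i : Fin k => x i.castSucc)))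
    (v : M) (hv : f v = Submodule.Quotient.mk (x (Fin.last k))) :
    cl M (Submodule.span R {v}) ⊓ LinearMap.ker f ≤
      cl M ((Ideal.span (Set.range fun i : Fin k => x i.castSucc)) •
        Submodule.span R {v}) := by
  let J := Ideal.span (Set.range fun i : Fin k => x i.castSucc)
  let g : M × R →ₗ[R] R ⧸ J := f.coprod J.mkQ
  have hg_surj : Function.Surjective g :=
    f.coprod_surjective_of_surjective_right J.mkQ_surjective
  have hgv : g (LinearMap.inl R M R v) = Submodule.Quotient.mk (x (Fin.last k)) := by
    simpa [g] using hv
  exact inf_ker_le_cl_smul_span_of_retract ax4 (LinearMap.fst_comp_inl R M R)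
    (LinearMap.coprod_inl f J.mkQ) J v (ax7 k x hx (M × R) g hg_surj _ hgv)

/-- generalized colon-capturing without the surjectivity
hypothesis on `f`, as a consequence of the big axioms. -/
theorem stmt17 {R : Type} [CommRing R] [IsDomain R] [IsLocalRing R]
    (cl : ∀ (M : Type) [AddCommGroup M] [Module R M], Submodule R M → Submodule R M)
    (ax1 : ∀ (M : Type) [AddCommGroup M] [Module R M] (N : Submodule R M), N ≤ cl M N)
    (ax2 : ∀ (M : Type) [AddCommGroup M] [Module R M] (N : Submodule R M),
      cl M (cl M N) = cl M N)
    (ax3 : ∀ (W : Type) [AddCommGroup W] [Module R W] (N M : Submodule R W),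
      N ≤ M → cl W N ≤ cl W M)
    (ax4 : ∀ (M W : Type) [AddCommGroup M] [Module R M] [AddCommGroup W] [Module R W]
      (f : M →ₗ[R] W) (N : Submodule R M), (cl M N).map f ≤ cl W (N.map f))
    (ax5 : ∀ (M : Type) [AddCommGroup M] [Module R M] (N : Submodule R M),
      cl M N = N → cl (M ⧸ N) (⊥ : Submodule R (M ⧸ N)) = ⊥)
    (ax6 : cl R (IsLocalRing.maximalIdeal R) = IsLocalRing.maximalIdeal R)
    (ax7 : ∀ (k : ℕ) (x : Fin (k + 1) → R), IsPartialSOP x →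
      ∀ (M : Type) [AddCommGroup M] [Module R M]
        (f : M →ₗ[R] (R ⧸ Ideal.span (Set.range fun i : Fin k => x i.castSucc))),
        Function.Surjective f → ∀ v : M,
          f v = Submodule.Quotient.mk (x (Fin.last k)) →
          cl M (Submodule.span R {v}) ⊓ LinearMap.ker f ≤
            cl M ((Ideal.span (Set.range fun i : Fin k => x i.castSucc)) •
              Submodule.span R {v}))
    (k : ℕ) (x : Fin (k + 1) → R) (hx : IsPartialSOP x)
    (M : Type) [AddCommGroup M] [Module R M]
    (f : M →ₗ[R] (R ⧸ Ideal.span (Set.range fun i : Fin k => x i.castSucc)))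
    (v : M) (hv : f v = Submodule.Quotient.mk (x (Fin.last k))) :
    cl M (Submodule.span R {v}) ⊓ LinearMap.ker f ≤
      cl M ((Ideal.span (Set.range fun i : Fin k => x i.castSucc)) •
        Submodule.span R {v}) :=
  stmt17_general cl ax4 ax7 k x hx M f v hv
end
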